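/- Let d ≥ 1 be an integer and C ≥ 0. Let s : ℤ → ℝ and, for each n ∈ ℕ, s_n : ℤ → ℝ all satisfy |s(j)| ≤ C, |s_n(j)| ≤ C for every j ∈ ℤ and the zero d-window condition. If sup_{j∈ℤ} |s_n(j) − s(j)| → 0 as n → ∞, then sup_{k∈ℤ, m∈ℕ} max( ρ(s_n;k,m)/ρ(s;k,m), ρ(s;k,m)/ρ(s_n;k,m) ) → 1 as n → ∞. -/

import Mathlib

open Filter

/-- `s : ℤ → ℝ` satisfies the zero `d`-window condition if every `d` consecutive
values sum to zero: `∑_{j=m}^{m+d-1} s j = 0` for all `m : ℤ`. -/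
def ZeroWindow (d : ℕ) (s : ℤ → ℝ) : Prop :=
  ∀ m : ℤ, ∑ j ∈ Finset.range d, s (m + j) = 0

/-- Forward partial sum `S_s(k,l) = ∑_{i=1}^{l} s (k+i)`, with `S_s(k,0) = 0`. -/
def Sfwd (s : ℤ → ℝ) (k : ℤ) (l : ℕ) : ℝ :=
  ∑ i ∈ Finset.range l, s (k + (i + 1))

/-- Backward partial sum `S_s⁻(k,l) = ∑_{i=1}^{l} s (k−i)`, with `S_s⁻(k,0) = 0`. -/
def Sbwd (s : ℤ → ℝ) (k : ℤ) (l : ℕ) : ℝ :=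
  ∑ i ∈ Finset.range l, s (k - (i + 1))

/-- Šarić's quasisymmetry quantity
`ρ(s;k,m) = e^{s k} · (∑_{l=0}^{m} e^{S_s(k,l)}) / (∑_{l=0}^{m} e^{−S_s⁻(k,l)})`. -/
noncomputable def rho (s : ℤ → ℝ) (k : ℤ) (m : ℕ) : ℝ :=
  Real.exp (s k) * (∑ l ∈ Finset.range (m + 1), Real.exp (Sfwd s k l)) /
    (∑ l ∈ Finset.range (m + 1), Real.exp (-(Sbwd s k l)))

/-! The zero-window condition makes any sum of consecutive values of `sₙ - s` collapse to
fewer than `d` terms, so the partial sums `S(k,l)`, `S⁻(k,l)` of `sₙ` and of `s` differ by at most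
`d εₙ`, where `εₙ = sup_j |sₙ j - s j|`. Comparing the sums in `ρ` termwise gives
`ρ(sₙ;k,m) ≤ e^{(2d+1)εₙ} ρ(s;k,m)` and symmetrically, uniformly in `k` and `m`. -/

open Finset Real

namespace ZeroWindow

variable {d : ℕ} {t u v : ℤ → ℝ} {ε : ℝ}

theorem sub (hu : ZeroWindow d u) (hv : ZeroWindow d v) : ZeroWindow d (u - v) := fun m => by
  simp only [Pi.sub_apply, sum_sub_distrib, hu m, hv m, sub_zero]

theorem abs_sum_range_le (hd : 1 ≤ d) (hw : ZeroWindow d t) (hb : ∀ j, |t j| ≤ ε) (l : ℕ)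
    (a : ℤ) : |∑ i ∈ range l, t (a + i)| ≤ d * ε := by
  induction l using Nat.strong_induction_on generalizing a with
  | _ l ih =>
    rcases lt_or_ge l d with hl | hl
    · have hε : 0 ≤ ε := (abs_nonneg _).trans (hb 0)
      calc |∑ i ∈ range l, t (a + i)| ≤ ∑ i ∈ range l, |t (a + i)| := abs_sum_le_sum_abs _ _
        _ ≤ ∑ _i ∈ range l, ε := sum_le_sum fun i _ => hb _
        _ = l * ε := by rw [sum_const, card_range, nsmul_eq_mul]
        _ ≤ d * ε := by gcongr
    · obtain ⟨r, rfl⟩ := Nat.exists_eq_add_of_le hl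
      rw [sum_range_add, hw a, zero_add]
      simpa only [Nat.cast_add, add_assoc] using ih r (by omega) (a + d)

end ZeroWindow

theorem Sfwd_eq_sum (s : ℤ → ℝ) (k : ℤ) (l : ℕ) :
    Sfwd s k l = ∑ i ∈ range l, s (k + 1 + i) := by
  simp only [Sfwd, add_assoc, add_comm (1 : ℤ)]

theorem Sbwd_eq_sum (s : ℤ → ℝ) (k : ℤ) (l : ℕ) :
    Sbwd s k l = ∑ i ∈ range l, s (k - l + i) := by
  rw [Sbwd, ← sum_range_reflect]
  refine sum_congr rfl fun i hi => ?_
  have hil : i < l := mem_range.mp hi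
  congr 1
  omega

theorem Sfwd_sub (u v : ℤ → ℝ) (k : ℤ) (l : ℕ) :
    Sfwd (u - v) k l = Sfwd u k l - Sfwd v k l := by
  simp only [Sfwd, Pi.sub_apply, sum_sub_distrib]

theorem Sbwd_sub (u v : ℤ → ℝ) (k : ℤ) (l : ℕ) :
    Sbwd (u - v) k l = Sbwd u k l - Sbwd v k l := by
  simp only [Sbwd, Pi.sub_apply, sum_sub_distrib]

section PartialSums

variable {d : ℕ} {t : ℤ → ℝ} {ε : ℝ}

theorem abs_Sfwd_le (hd : 1 ≤ d) (hw : ZeroWindow d t) (hb : ∀ j, |t j| ≤ ε) (k : ℤ) (l : ℕ) :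
    |Sfwd t k l| ≤ d * ε := by
  rw [Sfwd_eq_sum]
  exact hw.abs_sum_range_le hd hb l _

theorem abs_Sbwd_le (hd : 1 ≤ d) (hw : ZeroWindow d t) (hb : ∀ j, |t j| ≤ ε) (k : ℤ) (l : ℕ) :
    |Sbwd t k l| ≤ d * ε := by
  rw [Sbwd_eq_sum]
  exact hw.abs_sum_range_le hd hb l _

end PartialSums

theorem sum_exp_le_exp_mul_sum_exp {ι : Type*} (s : Finset ι) {f g : ι → ℝ} {c : ℝ}
    (h : ∀ i ∈ s, f i ≤ c + g i) : ∑ i ∈ s, exp (f i) ≤ exp c * ∑ i ∈ s, exp (g i) := by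
  rw [mul_sum]
  exact sum_le_sum fun i hi => by rw [← exp_add]; exact exp_le_exp.mpr (h i hi)

theorem sum_range_succ_exp_pos (f : ℕ → ℝ) (m : ℕ) : 0 < ∑ l ∈ range (m + 1), exp (f l) :=
  sum_pos (fun _ _ => exp_pos _) nonempty_range_add_one

theorem rho_pos (s : ℤ → ℝ) (k : ℤ) (m : ℕ) : 0 < rho s k m :=
  div_pos (mul_pos (exp_pos _) (sum_range_succ_exp_pos _ m)) (sum_range_succ_exp_pos _ m)

theorem rho_le_exp_mul_rho {d : ℕ} (hd : 1 ≤ d) {u v : ℤ → ℝ} {ε : ℝ}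
    (hwu : ZeroWindow d u) (hwv : ZeroWindow d v) (hb : ∀ j, |u j - v j| ≤ ε) (k : ℤ) (m : ℕ) :
    rho u k m ≤ exp ((2 * d + 1) * ε) * rho v k m := by
  have hw := hwu.sub hwv
  have hfwd : ∀ l ∈ range (m + 1), Sfwd u k l ≤ d * ε + Sfwd v k l := fun l _ => by
    have := (abs_le.mp (abs_Sfwd_le hd hw hb k l)).2
    rw [Sfwd_sub] at this
    linarith
  have hbwd : ∀ l ∈ range (m + 1), -Sbwd v k l ≤ d * ε + -Sbwd u k l := fun l _ => by
    have := (abs_le.mp (abs_Sbwd_le hd hw hb k l)).2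
    rw [Sbwd_sub] at this
    linarith
  have hk : u k ≤ ε + v k := by linarith [(abs_le.mp (hb k)).2]
  have hBu := sum_range_succ_exp_pos (fun l => -Sbwd u k l) m
  calc rho u k m
      ≤ exp (ε + v k) * (exp (d * ε) * ∑ l ∈ range (m + 1), exp (Sfwd v k l)) /
          (exp (-(d * ε)) * ∑ l ∈ range (m + 1), exp (-Sbwd v k l)) := by
        unfold rho
        gcongr
        · exact sum_exp_le_exp_mul_sum_exp _ hfwd
        · rw [exp_neg, inv_mul_le_iff₀ (exp_pos _)]
          exact sum_exp_le_exp_mul_sum_exp _ hbwd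
    _ = exp ((2 * d + 1) * ε) * rho v k m := by
        rw [rho, show (2 * d + 1) * ε = ε + v k + d * ε - -(d * ε) - v k by ring]
        simp only [exp_sub, exp_add]
        field_simp

theorem one_le_max_div_div {x y : ℝ} (hx : 0 < x) (hy : 0 < y) : 1 ≤ max (x / y) (y / x) := by
  rcases le_total x y with h | h
  · exact ((one_le_div hx).2 h).trans (le_max_right _ _)
  · exact ((one_le_div hy).2 h).trans (le_max_left _ _)

theorem tendsto_iSup₂_of_le_of_le {α ι κ : Type*} [Nonempty ι] [Nonempty κ] {l : Filter α}
    {F : α → ι → κ → ℝ} {a : ℝ} {b : α → ℝ} (hlow : ∀ n i j, a ≤ F n i j)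
    (hup : ∀ n i j, F n i j ≤ b n) (hb : Tendsto b l (nhds a)) :
    Tendsto (fun n => ⨆ (i) (j), F n i j) l (nhds a) := by
  have hbdd : ∀ n i, BddAbove (Set.range (F n i)) := fun n i =>
    ⟨b n, Set.forall_mem_range.2 (hup n i)⟩
  have hbdd₂ : ∀ n, BddAbove (Set.range fun i => ⨆ j, F n i j) := fun n =>
    ⟨b n, Set.forall_mem_range.2 fun i => ciSup_le (hup n i)⟩
  refine tendsto_of_tendsto_of_tendsto_of_le_of_le tendsto_const_nhds hb (fun n => ?_)
    (fun n => ciSup_le fun i => ciSup_le (hup n i))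
  obtain ⟨i⟩ := ‹Nonempty ι›
  obtain ⟨j⟩ := ‹Nonempty κ›
  exact le_ciSup_of_le (hbdd₂ n) i (le_ciSup_of_le (hbdd n i) j (hlow n i j))

theorem rho_ratio_sup_tendsto_one_general (d : ℕ) (hd : 1 ≤ d) (C : ℝ)
    (s : ℤ → ℝ) (sn : ℕ → ℤ → ℝ)
    (hs : ∀ j : ℤ, |s j| ≤ C) (hsn : ∀ (n : ℕ) (j : ℤ), |sn n j| ≤ C)
    (hws : ZeroWindow d s) (hwsn : ∀ n : ℕ, ZeroWindow d (sn n))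
    (hconv : Tendsto (fun n => ⨆ j : ℤ, |sn n j - s j|) atTop (nhds 0)) :
    Tendsto
      (fun n => ⨆ (k : ℤ) (m : ℕ),
        max (rho (sn n) k m / rho s k m) (rho s k m / rho (sn n) k m))
      atTop (nhds 1) := by
  set ε : ℕ → ℝ := fun n => ⨆ j : ℤ, |sn n j - s j|
  have hbdd : ∀ n, BddAbove (Set.range fun j => |sn n j - s j|) := fun n =>
    ⟨C + C, Set.forall_mem_range.2 fun j => (abs_sub _ _).trans (add_le_add (hsn n j) (hs j))⟩
  have hdist : ∀ n j, |sn n j - s j| ≤ ε n := fun n => le_ciSup (hbdd n)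
  have hdist' : ∀ n j, |s j - sn n j| ≤ ε n := fun n j => abs_sub_comm (s j) _ ▸ hdist n j
  refine tendsto_iSup₂_of_le_of_le (b := fun n => exp ((2 * d + 1) * ε n))
    (fun n k m => one_le_max_div_div (rho_pos _ k m) (rho_pos _ k m)) (fun n k m => max_le ?_ ?_) ?_
  · exact (div_le_iff₀ (rho_pos _ k m)).2 (rho_le_exp_mul_rho hd (hwsn n) hws (hdist n) k m)
  · exact (div_le_iff₀ (rho_pos _ k m)).2 (rho_le_exp_mul_rho hd hws (hwsn n) (hdist' n) k m)
  · have := (continuous_exp.tendsto _).comp (hconv.const_mul (2 * d + 1 : ℝ))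
    rwa [mul_zero, exp_zero] at this

/-- If `s` and the `sₙ` are uniformly bounded by `C`, all satisfy the zero
`d`-window condition, and `sup_j |sₙ j − s j| → 0`, then
`sup_{k,m} max( ρ(sₙ;k,m)/ρ(s;k,m), ρ(s;k,m)/ρ(sₙ;k,m) ) → 1` as `n → ∞`. -/
theorem rho_ratio_sup_tendsto_one (d : ℕ) (hd : 1 ≤ d) (C : ℝ) (hC : 0 ≤ C)
    (s : ℤ → ℝ) (sn : ℕ → ℤ → ℝ)
    (hs : ∀ j : ℤ, |s j| ≤ C) (hsn : ∀ (n : ℕ) (j : ℤ), |sn n j| ≤ C)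
    (hws : ZeroWindow d s) (hwsn : ∀ n : ℕ, ZeroWindow d (sn n))
    (hconv : Tendsto (fun n => ⨆ j : ℤ, |sn n j - s j|) atTop (nhds 0)) :
    Tendsto
      (fun n => ⨆ (k : ℤ) (m : ℕ),
        max (rho (sn n) k m / rho s k m) (rho s k m / rho (sn n) k m))
      atTop (nhds 1) :=
  rho_ratio_sup_tendsto_one_general d hd C s sn hs hsn hws hwsn hconv
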